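/- Let m, n, s be positive integers with s dividing both m and n. Then Σ ∏_{i=1}^{l} (-1)^{m_i - 1} · (-1)^{(s+1)·(m_i/s)} · C(n/s, m_i/s) = C(m/s + n/s - 1, m/s), where the sum ranges over all compositions (m_1, …, m_l) of m in which every part m_i is divisible by s. -/

import Mathlib

open Finset

/-!
Writing the parts as `s * j`, compositions of `m` into multiples of `s` are compositions of
`M = m / s`, and the two signs combine to `(-1) ^ (j - 1)`. For weights `w j` on the parts, the
weighted count `G` of compositions satisfies `G = 1 + F * G` with `F = ∑_{j ≥ 1} w j X ^ j`
(split off the first block). For `w j = (-1) ^ (j - 1) * N.choose j` we have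
`1 - F = (1 - X) ^ N`, so `G = (1 - X) ^ (-N)`, whose coefficients are `(M + N - 1).choose M`.
-/

namespace PowerSeries

variable {R : Type*} [CommRing R]

theorem coeff_one_sub_X_pow (N j : ℕ) :
    coeff j ((1 - X : R⟦X⟧) ^ N) = (-1) ^ j * N.choose j := by
  have h : (1 - X : R⟦X⟧) = rescale (-1) (1 + X) := by simp [sub_eq_add_neg]
  rw [h, ← map_pow, coeff_rescale, ← Polynomial.coe_X, ← Polynomial.coe_one, ← Polynomial.coe_add,
    ← Polynomial.coe_pow, Polynomial.coeff_coe, Polynomial.coeff_one_add_X_pow]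

theorem coeff_invOneSubPow (d n : ℕ) :
    coeff n (invOneSubPow R d : R⟦X⟧) = (n + d - 1).choose n := by
  rcases d with _ | d
  · rcases n with _ | n <;> simp [invOneSubPow_zero, coeff_one]
  · rw [invOneSubPow_val_succ_eq_mk_add_choose, coeff_mk, Nat.add_succ_sub_one, add_comm n,
      Nat.choose_symm_add]

end PowerSeries

section CompositionSum

open PowerSeries

variable {R : Type*} [CommRing R]

def compositionSum (w : ℕ → R) (M : ℕ) : R :=
  ∑ c : Composition M, (c.blocks.map w).prod

@[simp]
theorem compositionSum_zero (w : ℕ → R) : compositionSum w 0 = 1 := by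
  have : Subsingleton (Composition 0) :=
    Fintype.card_le_one_iff_subsingleton.mp (by simp [composition_card])
  rw [compositionSum, Fintype.sum_subsingleton _ (Composition.ones 0)]
  simp

theorem compositionSum_succ (w : ℕ → R) (M : ℕ) :
    compositionSum w (M + 1) =
      ∑ p ∈ antidiagonal M, w (p.1 + 1) * compositionSum w p.2 := by
  simp_rw [compositionSum, mul_sum]
  rw [sum_sigma']
  symm
  refine sum_bij (fun p hp => ((Composition.single (p.1.1 + 1) p.1.1.succ_pos).append p.2).cast
      (by rw [← mem_antidiagonal.mp (mem_sigma.mp hp).1]; omega)) (fun _ _ => mem_univ _)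
    ?inj ?surj (fun p _ => by simp)
  case inj =>
    rintro ⟨⟨k, n⟩, c⟩ hp ⟨⟨k', n'⟩, c'⟩ hp' h
    have hb := congrArg Composition.blocks h
    simp only [Composition.cast_blocks, Composition.append_blocks, Composition.single_blocks,
      List.singleton_append, List.cons.injEq, add_left_inj] at hb
    obtain ⟨rfl, hb⟩ := hb
    obtain rfl : n = n' := by
      have := mem_antidiagonal.mp (mem_sigma.mp hp).1
      have := mem_antidiagonal.mp (mem_sigma.mp hp').1
      simp only at *
      omega
    obtain rfl : c = c' := Composition.ext hb
    rfl
  case surj =>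
    rintro ⟨_ | ⟨a, l⟩, hpos, hsum⟩ -
    · simp at hsum
    have ha : 0 < a := hpos List.mem_cons_self
    simp only [List.sum_cons] at hsum
    refine ⟨⟨(a - 1, l.sum), ⟨l, fun hi => hpos (List.mem_cons_of_mem _ hi), rfl⟩⟩,
      by simp [mem_sigma]; omega, ?_⟩
    ext1
    simp only [Composition.cast_blocks, Composition.append_blocks, Composition.single_blocks,
      List.singleton_append]
    congr
    omega

theorem mk_compositionSum_mul (w : ℕ → R) :
    PowerSeries.mk (compositionSum w) * (1 - X * PowerSeries.mk fun k => w (k + 1)) = 1 := by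
  ext (_ | M)
  · simp
  · rw [mul_sub, mul_one, map_sub, mul_left_comm, coeff_succ_X_mul, coeff_mul, coeff_mk,
      compositionSum_succ, ← Nat.sum_antidiagonal_swap]
    simp [mul_comm]

theorem compositionSum_neg_one_pow_mul_choose (N M : ℕ) :
    compositionSum (fun j => (-1) ^ (j - 1) * (N.choose j : R)) M = (M + N - 1).choose M := by
  have hseries :
      (1 - X * PowerSeries.mk fun k => (-1) ^ k * (N.choose (k + 1) : R)) = (1 - X) ^ N := by
    ext (_ | k)
    · simp [coeff_one_sub_X_pow]
    · simp [coeff_one_sub_X_pow, pow_succ]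
  have hinv := mk_compositionSum_mul (fun j => (-1) ^ (j - 1) * (N.choose j : R))
  simp only [Nat.add_sub_cancel, hseries] at hinv
  have hG : PowerSeries.mk (compositionSum fun j => (-1) ^ (j - 1) * (N.choose j : R)) =
      invOneSubPow R N := by
    rw [← mul_one (PowerSeries.mk _), ← (invOneSubPow R N).inv_val, ← mul_assoc,
      invOneSubPow_inv_eq_one_sub_pow, hinv, one_mul]
  rw [← coeff_invOneSubPow, ← hG, coeff_mk]

@[simps]
def Composition.scale {s M : ℕ} (hs : 0 < s) (c : Composition M) : Composition (s * M) where
  blocks := c.blocks.map (s * ·)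
  blocks_pos hi := by
    obtain ⟨j, hj, rfl⟩ := List.mem_map.mp hi
    exact Nat.mul_pos hs (c.blocks_pos hj)
  blocks_sum := by rw [List.sum_map_mul_left, List.map_id', c.blocks_sum]

theorem sum_filter_dvd_blocks {s : ℕ} (hs : 0 < s) (g : ℕ → R) (M : ℕ) :
    ∑ c ∈ univ.filter (fun c : Composition (s * M) => ∀ i ∈ c.blocks, s ∣ i),
        (c.blocks.map g).prod =
      compositionSum (fun j => g (s * j)) M := by
  symm
  refine sum_bij (fun c _ => c.scale hs) (fun c _ => ?mem) (fun c _ c' _ h => ?inj) ?surj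
    (fun c _ => by simp [Function.comp_def])
  case mem =>
    simp
  case inj =>
    exact Composition.ext <| List.map_injective_iff.mpr (mul_right_injective₀ hs.ne')
      (congrArg Composition.blocks h)
  case surj =>
    intro c hc
    have hmul_div : c.blocks.map (fun i => s * (i / s)) = c.blocks := by
      conv_rhs => rw [← List.map_id c.blocks]
      exact List.map_congr_left fun i hi => Nat.mul_div_cancel' ((mem_filter.mp hc).2 i hi)
    refine ⟨⟨c.blocks.map (· / s), fun hi => ?_, ?_⟩, mem_univ _, ?_⟩
    · obtain ⟨i, hi', rfl⟩ := List.mem_map.mp hi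
      exact Nat.div_pos (Nat.le_of_dvd (c.blocks_pos hi') ((mem_filter.mp hc).2 i hi')) hs
    · apply Nat.eq_of_mul_eq_mul_left hs
      rw [← List.sum_map_mul_left, hmul_div, c.blocks_sum]
    · ext1
      rw [Composition.scale_blocks, List.map_map]
      exact hmul_div

end CompositionSum

theorem neg_one_pow_mul_sub_one_mul_neg_one_pow_succ_mul {R : Type*} [Monoid R] [HasDistribNeg R]
    {s : ℕ} (hs : 0 < s) (j : ℕ) :
    (-1 : R) ^ (s * j - 1) * (-1) ^ ((s + 1) * j) = (-1) ^ (j - 1) := by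
  rcases j with _ | j
  · simp
  have hexp : s * (j + 1) - 1 + (s + 1) * (j + 1) = 2 * (s * (j + 1)) + j := by
    have hpos : 0 < s * (j + 1) := Nat.mul_pos hs j.succ_pos
    have hsplit : (s + 1) * (j + 1) = s * (j + 1) + (j + 1) := add_one_mul s (j + 1)
    omega
  rw [← pow_add, hexp, pow_add, pow_mul]
  simp

theorem sum_compositions_divisible_parts_signed_binomial_general
    (m n s : ℕ) (hs : 0 < s)
    (hsm : s ∣ m) :
    ∑ c ∈ Finset.univ.filter (fun c : Composition m => ∀ i ∈ c.blocks, s ∣ i),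
        (c.blocks.map fun mi =>
          (-1 : ℤ) ^ (mi - 1) * (-1 : ℤ) ^ ((s + 1) * (mi / s)) *
            ((n / s).choose (mi / s) : ℤ)).prod =
      ((m / s + n / s - 1).choose (m / s) : ℤ) := by
  obtain ⟨M, rfl⟩ := hsm
  rw [sum_filter_dvd_blocks hs, Nat.mul_div_cancel_left M hs,
    ← compositionSum_neg_one_pow_mul_choose]
  congr 1
  funext j
  rw [Nat.mul_div_cancel_left j hs, neg_one_pow_mul_sub_one_mul_neg_one_pow_succ_mul hs]

theorem sum_compositions_divisible_parts_signed_binomial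
    (m n s : ℕ) (hm : 0 < m) (hn : 0 < n) (hs : 0 < s)
    (hsm : s ∣ m) (hsn : s ∣ n) :
    ∑ c ∈ Finset.univ.filter (fun c : Composition m => ∀ i ∈ c.blocks, s ∣ i),
        (c.blocks.map fun mi =>
          (-1 : ℤ) ^ (mi - 1) * (-1 : ℤ) ^ ((s + 1) * (mi / s)) *
            ((n / s).choose (mi / s) : ℤ)).prod =
      ((m / s + n / s - 1).choose (m / s) : ℤ) :=
  sum_compositions_divisible_parts_signed_binomial_general m n s hs hsm
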